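/- arXiv:math/0309132 — 2 statements merged into one kernel-verified Lean document; each statement's English description precedes it below -/
import Mathlib

section
/- Let s, t, a be integers with s < a < t and a ≥ 0. Suppose i, i' ∈ 𝒫^{-a}/𝒫^{-s}, y, y' ∈ 𝒫^{a+1}/𝒫^{t}, z, z' ∈ 𝒫/𝒫^{t-s}, and let U (respectively U') be the matrix with rows (1, i, 0), (0, 1, 0), (y, z, 1) (respectively (1, i', 0), (0, 1, 0), (y', z', 1)). If U^{-1}·U' ∈ I^a ∩ x_{(s,t)}·GL_3(𝒪)·x_{(s,t)}^{-1}, then i = i', y = y', and z = z'. In particular, the triples (i, y, z) give a complete set of distinct coset representatives for I^a modulo I^a ∩ x_{(s,t)}·GL_3(𝒪)·x_{(s,t)}^{-1}. -/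
noncomputable section

/-- The element π of F = K((π)). -/
def pp (K : Type*) [Field K] : LaurentSeries K := HahnSeries.single (1 : ℤ) (1 : K)

/-- The π-adic valuation on F = K((π)), with v(0) = ⊤. -/
def vv {K : Type*} [Field K] (x : LaurentSeries K) : WithTop ℤ := x.orderTop

/-- x ∈ 𝒫^r, i.e. v(x) ≥ r. -/
def inP {K : Type*} [Field K] (r : ℤ) (x : LaurentSeries K) : Prop := (r : WithTop ℤ) ≤ vv x

/-- x ∈ 𝒫^r/𝒫^{r'} : x is a polynomial x_r π^r + ⋯ + x_{r'-1} π^{r'-1} (possibly 0). -/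
def inPQ {K : Type*} [Field K] (r r' : ℤ) (x : LaurentSeries K) : Prop :=
  inP r x ∧ ∀ i : ℤ, r' ≤ i → x.coeff i = 0

/-- Membership in GL₃(𝒪): entries in 𝒪 and determinant a unit of 𝒪. -/
def inGLO {K : Type*} [Field K] (C : Matrix (Fin 3) (Fin 3) (LaurentSeries K)) : Prop :=
  (∀ i j, inP 0 (C i j)) ∧ vv C.det = 0

/-- The matrix x_{(s,t)} = diag(1, π^s, π^t). -/
def xst (K : Type*) [Field K] (s t : ℤ) : Matrix (Fin 3) (Fin 3) (LaurentSeries K) :=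
  Matrix.diagonal ![1, pp K ^ s, pp K ^ t]

/-- Membership in the subgroup I^a of GL₃(F). -/
def inIa {K : Type*} [Field K] (a : ℤ) (g : Matrix (Fin 3) (Fin 3) (LaurentSeries K)) : Prop :=
  g.det ≠ 0 ∧
  vv (g 0 0) = 0 ∧ vv (g 1 1) = 0 ∧ vv (g 2 2) = 0 ∧
  inP (-a) (g 0 1) ∧ inP (-a) (g 0 2) ∧ inP 0 (g 1 2) ∧
  inP (a + 1) (g 1 0) ∧ inP (a + 1) (g 2 0) ∧ inP 1 (g 2 1)

/-- Membership in x_{(s,t)}·GL₃(𝒪)·x_{(s,t)}⁻¹. -/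
def inConj {K : Type*} [Field K] (s t : ℤ) (g : Matrix (Fin 3) (Fin 3) (LaurentSeries K)) : Prop :=
  ∃ C, inGLO C ∧ g = xst K s t * C * (xst K s t)⁻¹

/-- M represents a γ-fixed point at the vertex (s,t): there is C ∈ GL₃(𝒪) with
γ·M·x_{(s,t)} = M·x_{(s,t)}·C. -/
def reprFixed {K : Type*} [Field K] (γ M : Matrix (Fin 3) (Fin 3) (LaurentSeries K))
    (s t : ℤ) : Prop :=
  ∃ C, inGLO C ∧ γ * (M * xst K s t) = M * xst K s t * C

/-
Write g = U⁻¹U' = x C x⁻¹ with C ∈ GL₃(𝒪) and x = diag(π^{e_0}, π^{e_1}, π^{e_2}), e = (0, s, t).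
Then g_{jk} = π^{e_j - e_k} C_{jk}, so v(g_{jk}) ≥ e_j - e_k. The entries (0,1), (2,0), (2,1) of
U⁻¹U' are i' - i, y' - y and z' - z + y(i - i'), so i' - i ∈ 𝒫^{-s}, y' - y ∈ 𝒫^t, and once
i = i' also z' - z ∈ 𝒫^{t-s}. Two expansions without terms of degree ≥ r' whose difference
lies in 𝒫^{r'} are equal.
-/

theorem HahnSeries.eq_of_le_orderTop_sub {Γ R : Type*} [LinearOrder Γ] [AddGroup R]
    {x y : HahnSeries Γ R} {r : Γ} (hx : ∀ j, r ≤ j → x.coeff j = 0)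
    (hy : ∀ j, r ≤ j → y.coeff j = 0) (h : (r : WithTop Γ) ≤ (x - y).orderTop) : x = y := by
  ext j
  by_cases hj : r ≤ j
  · rw [hx j hj, hy j hj]
  · rw [← sub_eq_zero, ← HahnSeries.coeff_sub]
    exact HahnSeries.le_orderTop_iff_forall.mp h j (WithTop.coe_lt_coe.mpr (not_le.mp hj))

theorem Matrix.unipotent_inv_mul {R : Type*} [CommRing R] (i y z i' y' z' : R) :
    (!![1, i, 0; 0, 1, 0; y, z, 1])⁻¹ * !![1, i', 0; 0, 1, 0; y', z', 1] =
      !![1, i' - i, 0; 0, 1, 0; y' - y, z' - z + y * (i - i'), 1] := by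
  have hinv : (!![1, i, 0; 0, 1, 0; y, z, 1])⁻¹ = !![1, -i, 0; 0, 1, 0; -y, y * i - z, 1] := by
    apply Matrix.inv_eq_right_inv
    rw [Matrix.one_fin_three, Matrix.mul_fin_three]
    congr <;> ring
  rw [hinv, Matrix.mul_fin_three]
  simp only [mul_one, mul_zero, add_zero, zero_mul, one_mul, zero_add, neg_mul,
    EmbeddingLike.apply_eq_iff_eq, Matrix.vecCons_inj, and_true, true_and]
  refine ⟨?_, ?_, ?_⟩ <;> ring

section

variable {K : Type*} [Field K]

theorem pp_zpow (m : ℤ) : pp K ^ m = HahnSeries.single m 1 :=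
  (RatFunc.single_zpow m).symm

theorem pp_ne_zero : pp K ≠ 0 :=
  HahnSeries.single_ne_zero one_ne_zero

theorem inP.pp_zpow_mul {r : ℤ} {c : LaurentSeries K} (hc : inP r c) (m : ℤ) :
    inP (m + r) (pp K ^ m * c) := by
  unfold inP vv at *
  rw [HahnSeries.orderTop_mul, pp_zpow, HahnSeries.orderTop_single one_ne_zero, WithTop.coe_add]
  gcongr

theorem inPQ.eq_of_inP_sub {r r' : ℤ} {u u' : LaurentSeries K} (hu : inPQ r r' u)
    (hu' : inPQ r r' u') (h : inP r' (u' - u)) : u = u' :=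
  (HahnSeries.eq_of_le_orderTop_sub hu'.2 hu.2 h).symm

theorem xst_eq_diagonal (s t : ℤ) : xst K s t = Matrix.diagonal fun k => pp K ^ ![0, s, t] k := by
  rw [xst]
  congr
  ext k
  fin_cases k <;> simp

theorem xst_inv (s t : ℤ) :
    (xst K s t)⁻¹ = Matrix.diagonal fun k => pp K ^ (-![0, s, t] k) := by
  refine Matrix.inv_eq_left_inv ?_
  rw [xst_eq_diagonal, Matrix.diagonal_mul_diagonal, ← Matrix.diagonal_one]
  congr
  ext k
  rw [zpow_neg, inv_mul_cancel₀ (zpow_ne_zero _ pp_ne_zero)]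

theorem inConj.inP_apply {s t : ℤ} {g : Matrix (Fin 3) (Fin 3) (LaurentSeries K)}
    (hg : inConj s t g) (j k : Fin 3) : inP (![0, s, t] j - ![0, s, t] k) (g j k) := by
  obtain ⟨C, ⟨hC, -⟩, rfl⟩ := hg
  rw [xst_inv, xst_eq_diagonal, Matrix.mul_diagonal, Matrix.diagonal_mul, mul_right_comm,
    ← zpow_add₀ pp_ne_zero, ← sub_eq_add_neg]
  simpa only [add_zero] using (hC j k).pp_zpow_mul (![0, s, t] j - ![0, s, t] k)

end

theorem stmt2_general (K : Type*) [Field K] (s t a : ℤ)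
    (i i' y y' z z' : LaurentSeries K)
    (hi : inPQ (-a) (-s) i) (hi' : inPQ (-a) (-s) i')
    (hy : inPQ (a + 1) t y) (hy' : inPQ (a + 1) t y')
    (hz : inPQ 1 (t - s) z) (hz' : inPQ 1 (t - s) z')
    (h : inIa a ((!![1, i, 0; 0, 1, 0; y, z, 1])⁻¹ * !![1, i', 0; 0, 1, 0; y', z', 1]) ∧
      inConj s t ((!![1, i, 0; 0, 1, 0; y, z, 1])⁻¹ * !![1, i', 0; 0, 1, 0; y', z', 1])) :
    i = i' ∧ y = y' ∧ z = z' := by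
  have hg := h.2
  rw [Matrix.unipotent_inv_mul] at hg
  have h01 : inP (-s) (i' - i) := by simpa using hg.inP_apply 0 1
  have h20 : inP t (y' - y) := by simpa using hg.inP_apply 2 0
  have h21 : inP (t - s) (z' - z + y * (i - i')) := by simpa using hg.inP_apply 2 1
  obtain rfl : i = i' := hi.eq_of_inP_sub hi' h01
  refine ⟨rfl, hy.eq_of_inP_sub hy' h20, hz.eq_of_inP_sub hz' ?_⟩
  simpa only [sub_self, mul_zero, add_zero] using h21

theorem stmt2 (K : Type*) [Field K] (s t a : ℤ) (ha : 0 ≤ a) (hsa : s < a) (hat : a < t)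
    (i i' y y' z z' : LaurentSeries K)
    (hi : inPQ (-a) (-s) i) (hi' : inPQ (-a) (-s) i')
    (hy : inPQ (a + 1) t y) (hy' : inPQ (a + 1) t y')
    (hz : inPQ 1 (t - s) z) (hz' : inPQ 1 (t - s) z')
    (h : inIa a ((!![1, i, 0; 0, 1, 0; y, z, 1])⁻¹ * !![1, i', 0; 0, 1, 0; y', z', 1]) ∧
      inConj s t ((!![1, i, 0; 0, 1, 0; y, z, 1])⁻¹ * !![1, i', 0; 0, 1, 0; y', z', 1])) :
    i = i' ∧ y = y' ∧ z = z' :=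
  stmt2_general K s t a i i' y y' z z' hi hi' hy hy' hz hz' h
end
end

section
/- Let 0 < t < s be integers and let k₀, y ∈ F satisfy v(k₀) ≥ max(s − t − n, 0) and v(y) ≥ max(t − m, 1). Define x' = − k₀·y·(1 − u₃/u₁)/(u₂/u₁ − 1). Then v(x') ≥ 1, and for every x ∈ F one has k₀·y·(1 − u₃/u₁) + x·(u₂/u₁ − 1) ∈ 𝒫^{s} if and only if v(x − x') ≥ s − m. (Thus the determined part of x is x' and the free part ranges over elements of valuation at least s − m.) -/
noncomputable section

/-!
Put `D = u₂/u₁ - 1` and `E = 1 - u₃/u₁`. Since the `uᵢ` are units, `v(D) = v(u₂ - u₁) = m` and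
`v(E) = v(u₃ - u₁) = m`. Hence `x' = -k₀ y E / D` has `v(x') = v(k₀) + v(y) ≥ 1`, and
`k₀ y E + x D = (x - x') D` lies in `𝒫^s` exactly when `v(x - x') ≥ s - m`.
-/

section Valuation

variable {K : Type*} [Field K]

theorem vv_eq_addVal (x : LaurentSeries K) : vv x = HahnSeries.addVal ℤ K x :=
  HahnSeries.addVal_apply.symm

theorem vv_mul (a b : LaurentSeries K) : vv (a * b) = vv a + vv b := by
  simp only [vv_eq_addVal, AddValuation.map_mul]

theorem vv_neg (a : LaurentSeries K) : vv (-a) = vv a := by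
  simp only [vv_eq_addVal, AddValuation.map_neg]

theorem vv_sub_comm (a b : LaurentSeries K) : vv (a - b) = vv (b - a) := by
  simp only [vv_eq_addVal, AddValuation.map_sub_swap]

theorem vv_div (a b : LaurentSeries K) : vv (a / b) = vv a - vv b := by
  simp only [vv_eq_addVal, AddValuation.map_div]

theorem ne_zero_of_vv_eq_coe {a : LaurentSeries K} {m : ℤ} (ha : vv a = m) : a ≠ 0 := by
  rintro rfl
  simp [vv] at ha

theorem vv_one_sub_div {a b : LaurentSeries K} (hb : vv b = 0) : vv (1 - a / b) = vv (b - a) := by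
  rw [one_sub_div (ne_zero_of_vv_eq_coe (m := 0) hb), vv_div, hb, sub_zero]

theorem vv_div_self_of_eq_coe {a b : LaurentSeries K} {m : ℤ} (ha : vv a = m) (hb : vv b = m) :
    vv (a / b) = 0 := by
  rw [vv_div, ha, hb, LinearOrderedAddCommGroupWithTop.sub_self_eq_zero_of_ne_top WithTop.coe_ne_top]

theorem inP_mul_iff {z D : LaurentSeries K} {s m : ℤ} (hD : vv D = m) :
    inP s (z * D) ↔ ((s - m : ℤ) : WithTop ℤ) ≤ vv z := by
  rw [inP, vv_mul, hD]
  induction vv z using WithTop.recTopCoe with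
  | top => simp
  | coe a =>
    rw [← WithTop.coe_add, WithTop.coe_le_coe, WithTop.coe_le_coe]
    omega

theorem inP_add_mul_iff {c D : LaurentSeries K} {s m : ℤ} (hD : vv D = m) (x : LaurentSeries K) :
    inP s (c + x * D) ↔ ((s - m : ℤ) : WithTop ℤ) ≤ vv (x - -c / D) := by
  have hD0 := ne_zero_of_vv_eq_coe hD
  rw [← inP_mul_iff hD, sub_mul, div_mul_cancel₀ _ hD0, sub_neg_eq_add, add_comm]

end Valuation

theorem stmt10_general (K : Type*) [Field K]
    (u₁ u₂ u₃ : LaurentSeries K) (m n : ℤ)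
    (hu₁ : vv u₁ = 0) (hu₂ : vv u₂ = 0) (hu₃ : vv u₃ = 0)
    (hv₁₂ : vv (1 - u₁ / u₂) = (m : WithTop ℤ))
    (hv₁₃ : vv (1 - u₁ / u₃) = (m : WithTop ℤ))
    (s t : ℤ)
    (k₀ y : LaurentSeries K)
    (hk₀ : ((max (s - t - n) 0 : ℤ) : WithTop ℤ) ≤ vv k₀)
    (hy : ((max (t - m) 1 : ℤ) : WithTop ℤ) ≤ vv y)
    (x' : LaurentSeries K) (hx' : x' = -(k₀ * y * (1 - u₃ / u₁)) / (u₂ / u₁ - 1)) :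
    (1 : WithTop ℤ) ≤ vv x' ∧
      ∀ x : LaurentSeries K,
        (inP s (k₀ * y * (1 - u₃ / u₁) + x * (u₂ / u₁ - 1)) ↔
          ((s - m : ℤ) : WithTop ℤ) ≤ vv (x - x')) := by
  have hD : vv (u₂ / u₁ - 1) = m := by
    rw [← neg_sub, vv_neg, vv_one_sub_div hu₁, vv_sub_comm, ← vv_one_sub_div hu₂, hv₁₂]
  have hE : vv (1 - u₃ / u₁) = m := by
    rw [vv_one_sub_div hu₁, vv_sub_comm, ← vv_one_sub_div hu₃, hv₁₃]
  have hk₀_nonneg : (0 : WithTop ℤ) ≤ vv k₀ := le_trans (by exact_mod_cast le_max_right _ _) hk₀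
  have hy_pos : (1 : WithTop ℤ) ≤ vv y := le_trans (by exact_mod_cast le_max_right _ _) hy
  refine ⟨?_, fun x => hx' ▸ inP_add_mul_iff hD x⟩
  calc (1 : WithTop ℤ) = 0 + 1 := (zero_add 1).symm
    _ ≤ vv k₀ + vv y := add_le_add hk₀_nonneg hy_pos
    _ = vv x' := by
      rw [hx', neg_div, vv_neg, mul_div_assoc, vv_mul, vv_mul, vv_div_self_of_eq_coe hE hD, add_zero]

theorem stmt10 (K : Type*) [Field K]
    (u₁ u₂ u₃ : LaurentSeries K) (m n : ℤ)
    (hu₁ : vv u₁ = 0) (hu₂ : vv u₂ = 0) (hu₃ : vv u₃ = 0)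
    (h₁₂ : u₁ ≠ u₂) (h₁₃ : u₁ ≠ u₃) (h₂₃ : u₂ ≠ u₃)
    (hm : 0 ≤ m) (hmn : m ≤ n)
    (hv₁₂ : vv (1 - u₁ / u₂) = (m : WithTop ℤ))
    (hv₁₃ : vv (1 - u₁ / u₃) = (m : WithTop ℤ))
    (hv₂₃ : vv (1 - u₂ / u₃) = (n : WithTop ℤ))
    (s t : ℤ) (ht : 0 < t) (hts : t < s)
    (k₀ y : LaurentSeries K)
    (hk₀ : ((max (s - t - n) 0 : ℤ) : WithTop ℤ) ≤ vv k₀)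
    (hy : ((max (t - m) 1 : ℤ) : WithTop ℤ) ≤ vv y)
    (x' : LaurentSeries K) (hx' : x' = -(k₀ * y * (1 - u₃ / u₁)) / (u₂ / u₁ - 1)) :
    (1 : WithTop ℤ) ≤ vv x' ∧
      ∀ x : LaurentSeries K,
        (inP s (k₀ * y * (1 - u₃ / u₁) + x * (u₂ / u₁ - 1)) ↔
          ((s - m : ℤ) : WithTop ℤ) ≤ vv (x - x')) :=
  stmt10_general K u₁ u₂ u₃ m n hu₁ hu₂ hu₃ hv₁₂ hv₁₃ s t k₀ y hk₀ hy x' hx'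
end
end
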